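/- Let G be a full and flexible group of homeomorphisms of Cantor space X. Then for every x ∈ X and every open neighbourhood U of x, the set {g(x) : g ∈ G and g restricted to X \ U is the identity} is dense in U. -/
import Mathlib


open Set

/-- The group structure on self-homeomorphisms of a topological space,
with `(f * g) x = f (g x)`. -/
instance homeoGroup {X : Type*} [TopologicalSpace X] : Group (X ≃ₜ X) where
  mul f g := g.trans f
  one := Homeomorph.refl X
  inv := Homeomorph.symm
  mul_assoc f g h := Homeomorph.ext fun _ => rfl
  one_mul f := Homeomorph.ext fun _ => rfl
  mul_one f := Homeomorph.ext fun _ => rfl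
  inv_mul_cancel f := Homeomorph.ext fun x => f.symm_apply_apply x

/-- Cantor space, realized concretely as `{0,1}^ℕ`. -/
abbrev Cantor : Type := ℕ → Bool

/-- `h` locally agrees with the group `G`: every point has an open neighbourhood
on which `h` coincides with some element of `G`. -/
def LocallyAgrees {X : Type*} [TopologicalSpace X] (G : Subgroup (X ≃ₜ X)) (h : X ≃ₜ X) : Prop :=
  ∀ x : X, ∃ U : Set X, IsOpen U ∧ x ∈ U ∧ ∃ g ∈ G, Set.EqOn (⇑h) (⇑g) U

/-- `G` is a full group of homeomorphisms. -/
def IsFull {X : Type*} [TopologicalSpace X] (G : Subgroup (X ≃ₜ X)) : Prop :=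
  ∀ h : X ≃ₜ X, LocallyAgrees G h → h ∈ G

/-- `G` is flexible: any proper closed set with nonempty interior can be mapped
into any other by some element of `G`. -/
def IsFlexible {X : Type*} [TopologicalSpace X] (G : Subgroup (X ≃ₜ X)) : Prop :=
  ∀ E₁ E₂ : Set X, IsClosed E₁ → E₁ ≠ Set.univ → (interior E₁).Nonempty →
    IsClosed E₂ → E₂ ≠ Set.univ → (interior E₂).Nonempty →
    ∃ g ∈ G, g '' E₁ ⊆ E₂

/-- The support of a homeomorphism: the closure of its set of moved points. -/
def supp {X : Type*} [TopologicalSpace X] (g : X ≃ₜ X) : Set X :=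
  closure {x | g x ≠ x}

/-- `g` has small support: it is the identity off a proper closed subset. -/
def HasSmallSupport {X : Type*} [TopologicalSpace X] (g : X ≃ₜ X) : Prop :=
  ∃ U : Set X, IsClosed U ∧ U ≠ Set.univ ∧ ∀ x ∉ U, g x = x


open Classical in
/-- The swap homeomorphism built from `g` and a clopen set `A` with `g '' A` disjoint from `A`. -/
noncomputable def swapHomeo {X : Type*} [TopologicalSpace X] (g : X ≃ₜ X) (A : Set X)
    (hA : IsClopen A) (hdisj : Disjoint (g '' A) A) : X ≃ₜ X := by
  have hAim : IsClopen (g '' A) := ⟨g.isClosedMap A hA.1, g.isOpenMap A hA.2⟩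
  set f : X → X := fun z => if z ∈ A then g z else if z ∈ g '' A then g.symm z else z with hf
  have hval : ∀ z, f z = if z ∈ A then g z else if z ∈ g '' A then g.symm z else z :=
    fun z => rfl
  have hinv : Function.Involutive f := by
    intro z
    by_cases hz : z ∈ A
    · have h1 : g z ∈ g '' A := mem_image_of_mem _ hz
      have h2 : g z ∉ A := fun h => (hdisj.ne_of_mem h1 h) rfl
      rw [hval z, if_pos hz, hval (g z), if_neg h2, if_pos h1, g.symm_apply_apply]
    · by_cases hz2 : z ∈ g '' A
      · have h1 : g.symm z ∈ A := by
          obtain ⟨w, hw, rfl⟩ := hz2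
          simpa using hw
        rw [hval z, if_neg hz, if_pos hz2, hval (g.symm z), if_pos h1, g.apply_symm_apply]
      · rw [hval z, if_neg hz, if_neg hz2, hval z, if_neg hz, if_neg hz2]
  have hcont : Continuous f := by
    apply Continuous.if
    · intro a ha
      rw [Set.setOf_mem_eq, isClopen_iff_frontier_eq_empty.mp hA] at ha
      exact absurd ha (notMem_empty a)
    · exact g.continuous
    · apply Continuous.if
      · intro a ha
        rw [Set.setOf_mem_eq, isClopen_iff_frontier_eq_empty.mp hAim] at ha
        exact absurd ha (notMem_empty a)
      · exact g.symm.continuous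
      · exact continuous_id
  exact ⟨hinv.toPerm f, hcont, hcont⟩

open Classical in
theorem swapHomeo_apply {X : Type*} [TopologicalSpace X] (g : X ≃ₜ X) (A : Set X)
    (hA : IsClopen A) (hdisj : Disjoint (g '' A) A) (z : X) :
    swapHomeo g A hA hdisj z =
      if z ∈ A then g z else if z ∈ g '' A then g.symm z else z := rfl

/-- for a full and flexible group `G`, for every point `x` and open
neighbourhood `U` of `x`, the orbit of `x` under elements supported in `U` is
dense in `U`. -/
theorem full_flexible_rubin_condition
    (G : Subgroup (Cantor ≃ₜ Cantor)) (hfull : IsFull G) (hflex : IsFlexible G)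
    (x : Cantor) (U : Set Cantor) (hU : IsOpen U) (hx : x ∈ U) :
    U ⊆ closure {y : Cantor | ∃ g ∈ G, (∀ z ∉ U, g z = z) ∧ g x = y} := by
  intro y hy
  rw [mem_closure_iff]
  intro V hV hyV
  by_cases hxV : x ∈ V
  · exact ⟨x, hxV, 1, G.one_mem, fun z _ => rfl, rfl⟩
  · obtain ⟨B, hB, hyB, hBsub⟩ :=
      compact_exists_isClopen_in_isOpen (hV.inter hU) ⟨hyV, hy⟩
    have hxB : x ∉ B := fun h => hxV (hBsub h).1
    obtain ⟨A, hA, hxA, hAsub⟩ :=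
      compact_exists_isClopen_in_isOpen (hU.sdiff hB.1) ⟨hx, hxB⟩
    obtain ⟨g, hgG, hgim⟩ := hflex A B hA.1
      (fun h => (hAsub (h ▸ mem_univ y)).2 hyB)
      (by rw [hA.2.interior_eq]; exact ⟨x, hxA⟩)
      hB.1 (fun h => hxB (h ▸ mem_univ x))
      (by rw [hB.2.interior_eq]; exact ⟨y, hyB⟩)
    have hdisj : Disjoint (⇑g '' A) A := by
      rw [Set.disjoint_left]
      exact fun z hz hzA => (hAsub hzA).2 (hgim hz)
    have hAim : IsClopen (⇑g '' A) := ⟨g.isClosedMap A hA.1, g.isOpenMap A hA.2⟩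
    set h := swapHomeo g A hA hdisj with hh
    have hmem : h ∈ G := by
      apply hfull
      intro z
      by_cases hz : z ∈ A
      · refine ⟨A, hA.2, hz, g, hgG, fun w hw => ?_⟩
        rw [hh, swapHomeo_apply, if_pos hw]
      · by_cases hz2 : z ∈ ⇑g '' A
        · refine ⟨⇑g '' A, hAim.2, hz2, g⁻¹, G.inv_mem hgG, fun w hw => ?_⟩
          have hwA : w ∉ A := fun hwA => (hAsub hwA).2 (hgim hw)
          rw [hh, swapHomeo_apply, if_neg hwA, if_pos hw]
          rfl
        · refine ⟨(A ∪ ⇑g '' A)ᶜ, (hA.1.union hAim.1).isOpen_compl,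
            fun hc => hc.elim hz hz2, 1, G.one_mem, fun w hw => ?_⟩
          have hwA : w ∉ A := fun hc => hw (Or.inl hc)
          have hwA2 : w ∉ ⇑g '' A := fun hc => hw (Or.inr hc)
          rw [hh, swapHomeo_apply, if_neg hwA, if_neg hwA2]
          rfl
    have hsupp : ∀ z ∉ U, h z = z := by
      intro z hzU
      have hzA : z ∉ A := fun hc => hzU (hAsub hc).1
      have hzA2 : z ∉ ⇑g '' A := fun hc => hzU (hBsub (hgim hc)).2
      rw [hh, swapHomeo_apply, if_neg hzA, if_neg hzA2]
    have hhx : h x = g x := by rw [hh, swapHomeo_apply, if_pos hxA]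
    refine ⟨h x, ?_, h, hmem, hsupp, rfl⟩
    rw [hhx]
    exact (hBsub (hgim (mem_image_of_mem _ hxA))).1
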